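/- arXiv:1404.4214 — 2 statements merged into one kernel-verified Lean document; each statement's English description precedes it below -/
import Mathlib

section
/- Let k = 4m+1 with m ≥ 0, r an odd positive integer, and n an integer with gcd(n,r)=1. Then the number of solutions of x_1²+...+x_k² ≡ n (mod r) equals r^{4m} · ∑_{d|r} (μ²(d)/d^{2m}) · (n|d). -/
/-!
Let `N_k(t)` count solutions of `x₁² + ⋯ + x_k² = t`. By the Chinese remainder theorem
`r ↦ N_k(n mod r)` is multiplicative, and so is the right-hand side, so it suffices to take
`r = p ^ b` with `p` an odd prime not dividing `n`.

Over `𝔽_q` with quadratic character `χ`, `N_1 = 1 + χ`, and the Jacobi sum `J(χ, χ) = -χ(-1)`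
gives `N_2(t) = q - χ(-1) + χ(-1) q [t = 0]`. Convolving, `N_4(t) = q³ - q + q² [t = 0]`, in which
`χ(-1)` has disappeared, and then `N_{4m+1}(t) = q^{4m} + q^{2m} χ(t)` by induction on `m`.

Since `p ∤ n`, every solution modulo `p ^ a` (`a ≥ 1`) has a coordinate prime to `p`, and the
kernel of `ℤ/p^{a+1} → ℤ/p^a` squares to zero; so each solution has exactly `p ^ (k - 1)` lifts
(Hensel). Hence `N_{4m+1}(n mod p^b) = p^{4m(b-1)} (p^{4m} + p^{2m} (n|p))`, which is the value of
the right-hand side at `p ^ b`, where only `d = 1` and `d = p` contribute.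
-/

open ArithmeticFunction

theorem card_add_eq_sum_card_mul {M α β : Type*} [AddCommGroup M] [Fintype M] [Finite α]
    [Finite β] (f : α → M) (g : β → M) (t : M) : Nat.card {p : α × β // f p.1 + g p.2 = t} =
      ∑ s, Nat.card {a // f a = s} * Nat.card {b // g b = t - s} := by
  simp only [← Nat.card_prod, ← Nat.card_sigma]
  exact Nat.card_congr
    { toFun := fun p => ⟨f p.1.1, ⟨p.1.1, rfl⟩, ⟨p.1.2, eq_sub_of_add_eq' p.2⟩⟩
      invFun := fun p => ⟨(p.2.1.1, p.2.2.1), by rw [p.2.1.2, p.2.2.2, add_sub_cancel]⟩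
      left_inv := fun p => rfl
      right_inv := by rintro ⟨s, ⟨a, rfl⟩, b⟩; rfl }

theorem sum_const_add_ite_mul {G A : Type*} [AddCommGroup G] [Fintype G] [DecidableEq G]
    [CommRing A] (a b : A) (f : G → A) (t : G) :
    ∑ s, (a + if s = 0 then b else 0) * f (t - s) = a * ∑ s, f s + b * f t := by
  simp only [add_mul, Finset.sum_add_distrib, ite_mul, zero_mul, Finset.sum_ite_eq',
    Finset.mem_univ, if_true, sub_zero, ← Finset.mul_sum]
  rw [Fintype.sum_equiv (Equiv.subLeft t) (fun s => f (t - s)) f fun _ => rfl]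

theorem AddMonoidHom.card_fiber_mul_card_of_surjective {G H : Type*} [AddGroup G] [AddGroup H]
    [Finite G] {f : G →+ H} (hf : Function.Surjective f) (h : H) :
    Nat.card {g // f g = h} * Nat.card H = Nat.card G := by
  rw [← f.ker.card_mul_index, AddSubgroup.index_ker, f.range_eq_top.2 hf, AddSubgroup.card_top]
  exact congrArg (· * _) (Nat.card_congr (f.fiberEquivKerOfSurjective hf h))

noncomputable def sumSqCount (R : Type*) [CommRing R] (k : ℕ) (t : R) : ℕ :=
  Nat.card {x : Fin k → R // ∑ i, x i ^ 2 = t}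

section CommRing

variable {R S T : Type*} [CommRing R] [CommRing S] [CommRing T]

theorem sumSqCount_ringEquiv (e : R ≃+* S) (k : ℕ) (t : R) :
    sumSqCount R k t = sumSqCount S k (e t) :=
  Nat.card_congr <| ((Equiv.refl (Fin k)).arrowCongr e.toEquiv).subtypeEquiv fun x => by
    simp [← map_pow, ← map_sum, e.injective.eq_iff]

theorem sumSqCount_prod (k : ℕ) (t : S × T) :
    sumSqCount (S × T) k t = sumSqCount S k t.1 * sumSqCount T k t.2 := by
  rw [sumSqCount, sumSqCount, sumSqCount, ← Nat.card_prod]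
  refine Nat.card_congr <|
    ((Equiv.arrowProdEquivProdArrow _ _ _).subtypeEquiv fun x => ?_).trans
      (Equiv.subtypeProdEquivProd)
  simp [Prod.ext_iff, Prod.fst_sum, Prod.snd_sum]

theorem sumSqCount_of_subsingleton [Subsingleton R] (k : ℕ) (t : R) : sumSqCount R k t = 1 :=
  Nat.card_eq_one_iff_unique.2 ⟨inferInstance, ⟨0, Subsingleton.elim _ _⟩⟩

variable [Fintype R]

theorem sum_sumSqCount (k : ℕ) : ∑ t, sumSqCount R k t = Fintype.card R ^ k := by
  simp only [sumSqCount]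
  rw [← Nat.card_sigma, Nat.card_congr (Equiv.sigmaFiberEquiv _), Nat.card_fun, Nat.card_fin,
    Nat.card_eq_fintype_card]

theorem sumSqCount_add (k₁ k₂ : ℕ) (t : R) :
    sumSqCount R (k₁ + k₂) t = ∑ s, sumSqCount R k₁ s * sumSqCount R k₂ (t - s) := by
  simp only [sumSqCount]
  rw [← card_add_eq_sum_card_mul]
  refine Nat.card_congr <|
    ((Equiv.sumArrowEquivProdArrow _ _ R).symm.trans
      (finSumFinEquiv.arrowCongr (Equiv.refl R))).symm.subtypeEquiv fun x => ?_
  simp [Fin.sum_univ_add]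

end CommRing

section FiniteField

variable {F : Type*} [Field F] [Fintype F] [DecidableEq F]

local notation "χ" => quadraticChar F
local notation "q" => (Fintype.card F : ℤ)

theorem sumSqCount_one (hF : ringChar F ≠ 2) (t : F) : (sumSqCount F 1 t : ℤ) = χ t + 1 := by
  rw [← quadraticChar_card_sqrts hF, sumSqCount, ← Nat.card_eq_card_toFinset]
  exact congrArg _ <| Nat.card_congr <| (Equiv.funUnique (Fin 1) F).subtypeEquiv fun x => by simp

theorem sum_quadraticChar_mul_quadraticChar_sub (hF : ringChar F ≠ 2) (t : F) :
    ∑ s, χ s * χ (t - s) = χ (-1) * ((if t = 0 then q else 0) - 1) := by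
  by_cases ht : t = 0
  · have hsq : ∀ s : F, χ s * χ (t - s) = χ (-1) * (χ s) ^ 2 := fun s => by
      rw [ht, zero_sub, neg_eq_neg_one_mul, map_mul]; ring
    simp only [hsq, ← Finset.mul_sum, if_pos ht]
    congr 1
    simp_rw [← MulChar.pow_apply' _ two_ne_zero, (quadraticChar_isQuadratic F).sq_eq_one]
    rw [MulChar.sum_one_eq_card_units, Fintype.card_units, Nat.cast_sub Fintype.card_pos,
      Nat.cast_one]
  · have hJ : jacobiSum χ χ = -χ (-1) := by
      conv_lhs => enter [2]; rw [← (quadraticChar_isQuadratic F).inv]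
      exact jacobiSum_nontrivial_inv (quadraticChar_ne_one hF)
    have hscale : ∀ u : F, χ (t * u) * χ (t - t * u) = χ u * χ (1 - u) := fun u => by
      rw [← mul_one_sub, map_mul, map_mul, mul_mul_mul_comm, ← sq, quadraticChar_sq_one ht, one_mul]
    rw [if_neg ht, zero_sub, mul_neg_one, ← hJ, jacobiSum,
      ← Fintype.sum_equiv (Equiv.mulLeft₀ t ht) _ _ fun u => (hscale u).symm]

theorem sumSqCount_two (hF : ringChar F ≠ 2) (t : F) :
    (sumSqCount F 2 t : ℤ) = q - χ (-1) + if t = 0 then χ (-1) * q else 0 := by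
  have hsum : ∑ s, χ s = 0 := quadraticChar_sum_zero hF
  have hsum' : ∑ s, χ (t - s) = 0 := by
    rw [Fintype.sum_equiv (Equiv.subLeft t) (fun s => χ (t - s)) χ fun _ => rfl, hsum]
  rw [sumSqCount_add 1 1, Nat.cast_sum]
  simp only [Nat.cast_mul, sumSqCount_one hF, mul_add, add_mul, one_mul, mul_one,
    Finset.sum_add_distrib, sum_quadraticChar_mul_quadraticChar_sub hF, hsum, hsum',
    Finset.sum_const, Finset.card_univ, nsmul_eq_mul, mul_one]
  split_ifs <;> ring

theorem sumSqCount_four (hF : ringChar F ≠ 2) (t : F) :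
    (sumSqCount F 4 t : ℤ) = q ^ 3 - q + if t = 0 then q ^ 2 else 0 := by
  have hε : χ (-1) ^ 2 = 1 := quadraticChar_sq_one (neg_ne_zero.2 one_ne_zero)
  have htotal : ∑ s, (sumSqCount F 2 s : ℤ) = q ^ 2 := by
    exact_mod_cast sum_sumSqCount (R := F) 2
  have hconv := sum_const_add_ite_mul (q - χ (-1)) (χ (-1) * q) (fun s => (sumSqCount F 2 s : ℤ)) t
  simp only [← sumSqCount_two hF] at hconv
  rw [sumSqCount_add 2 2, Nat.cast_sum]
  simp only [Nat.cast_mul, hconv, htotal, sumSqCount_two hF t]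
  split_ifs
  · linear_combination (q ^ 2 - q) * hε
  · linear_combination -q * hε

theorem sumSqCount_four_add (hF : ringChar F ≠ 2) (k : ℕ) (t : F) :
    (sumSqCount F (4 + k) t : ℤ) = (q ^ 3 - q) * q ^ k + q ^ 2 * sumSqCount F k t := by
  have hconv := sum_const_add_ite_mul (q ^ 3 - q) (q ^ 2) (fun s => (sumSqCount F k s : ℤ)) t
  simp only [← sumSqCount_four hF] at hconv
  rw [sumSqCount_add, Nat.cast_sum]
  simp only [Nat.cast_mul, hconv]
  rw [← Nat.cast_sum, sum_sumSqCount]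
  push_cast
  ring

theorem sumSqCount_four_mul_add_one (hF : ringChar F ≠ 2) (m : ℕ) (t : F) :
    (sumSqCount F (4 * m + 1) t : ℤ) = q ^ (4 * m) + q ^ (2 * m) * χ t := by
  induction m with
  | zero => simpa [add_comm] using sumSqCount_one hF t
  | succ m ih =>
    rw [show 4 * (m + 1) + 1 = 4 + (4 * m + 1) by ring, sumSqCount_four_add hF, ih]
    ring

end FiniteField

section SquareZero

variable {R S : Type*} [CommRing R] [CommRing S] {φ : R →+* S}

theorem card_ker_mul_card_of_surjective [Finite R] (hφ : Function.Surjective φ) :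
    Nat.card (RingHom.ker φ) * Nat.card S = Nat.card R :=
  (φ : R →+ S).card_fiber_mul_card_of_surjective hφ 0

theorem exists_mem_ker_mul_eq (hφ : Function.Surjective φ)
    (hsq : ∀ u ∈ RingHom.ker φ, ∀ v ∈ RingHom.ker φ, u * v = 0) {c : R} (hc : IsUnit (φ c))
    {d : R} (hd : d ∈ RingHom.ker φ) : ∃ e ∈ RingHom.ker φ, c * e = d := by
  obtain ⟨u, hu⟩ := hφ ↑hc.unit⁻¹
  have hcu : c * u - 1 ∈ RingHom.ker φ := by
    rw [RingHom.mem_ker, map_sub, map_mul, hu, map_one, hc.mul_val_inv, sub_self]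
  exact ⟨u * d, Ideal.mul_mem_left _ u hd, by linear_combination hsq _ hcu _ hd⟩

/-- Lifts of `y` are `x₀ + w` with `w : ι → K` for a fixed lift `x₀`; as `K² = 0`, the equation
becomes the affine condition `2 ∑ x₀ᵢ wᵢ = n - ∑ x₀ᵢ²`, a fibre of a surjective additive map. -/
theorem card_lifts_sum_sq_mul_card_ker [Finite R] (hφ : Function.Surjective φ)
    (hsq : ∀ u ∈ RingHom.ker φ, ∀ v ∈ RingHom.ker φ, u * v = 0) {ι : Type*} [Fintype ι]
    [DecidableEq ι] {y : ι → S} {n : R} (hy : ∑ i, y i ^ 2 = φ n) {i₀ : ι}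
    (hi₀ : IsUnit (2 * y i₀)) :
    Nat.card {x : ι → R // φ ∘ x = y ∧ ∑ i, x i ^ 2 = n} * Nat.card (RingHom.ker φ) =
      Nat.card (RingHom.ker φ) ^ Fintype.card ι := by
  set K := RingHom.ker φ
  obtain ⟨x₀, rfl⟩ := hφ.comp_left y
  let L : (ι → K) →ₗ[R] K := ∑ i, (2 * x₀ i) • LinearMap.proj i
  have hL : ∀ w, (L w : R) = ∑ i, 2 * x₀ i * w i := fun w => by simp [L, mul_assoc]
  have hLsurj : Function.Surjective L := fun d => by
    obtain ⟨e, he, hce⟩ :=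
      exists_mem_ker_mul_eq hφ hsq (c := 2 * x₀ i₀) (by rwa [map_mul, map_ofNat]) d.2
    refine ⟨Pi.single i₀ ⟨e, he⟩, Subtype.ext ?_⟩
    rw [hL, Finset.sum_eq_single i₀ (fun i _ hi => by simp [Pi.single_eq_of_ne hi]) (by simp),
      Pi.single_eq_same, hce]
  let D : K := ⟨∑ i, x₀ i ^ 2 - n, by simp [K, ← hy]⟩
  have hfiber : ∀ w : ι → K, L w = -D ↔ ∑ i, (x₀ i + w i) ^ 2 = n := fun w => by
    have hw : ∀ i, (w i : R) ^ 2 = 0 := fun i => (sq _).trans (hsq _ (w i).2 _ (w i).2)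
    rw [← sub_eq_zero (b := n), Subtype.ext_iff, Submodule.coe_neg, hL, eq_neg_iff_add_eq_zero]
    refine Eq.congr_left ?_
    simp only [D, add_sq, Finset.sum_add_distrib, hw, add_zero]
    ring
  have hcard : Nat.card {w : ι → K // L w = -D} * Nat.card K = Nat.card K ^ Fintype.card ι := by
    rw [← Nat.card_eq_fintype_card, ← Nat.card_fun]
    exact L.toAddMonoidHom.card_fiber_mul_card_of_surjective hLsurj (-D)
  rw [← hcard]
  refine congrArg (· * _) (Nat.card_congr
    { toFun := fun x => ⟨fun i => ⟨x.1 i - x₀ i, ?_⟩, (hfiber _).2 ?_⟩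
      invFun := fun w => ⟨fun i => x₀ i + w.1 i, ?_, (hfiber _).1 w.2⟩
      left_inv := fun x => by ext; simp
      right_inv := fun w => by ext; simp })
  · simpa [K, sub_eq_zero] using congrFun x.2.1 i
  · simpa using x.2.2
  · ext i
    simpa using RingHom.mem_ker.1 (w.1 i).2

theorem card_sum_sq_mul_card_ker [Finite R] (hφ : Function.Surjective φ)
    (hsq : ∀ u ∈ RingHom.ker φ, ∀ v ∈ RingHom.ker φ, u * v = 0) {ι : Type*} [Fintype ι]
    [DecidableEq ι] {n : R}
    (hunit : ∀ y : ι → S, ∑ i, y i ^ 2 = φ n → ∃ i, IsUnit (2 * y i)) :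
    Nat.card {x : ι → R // ∑ i, x i ^ 2 = n} * Nat.card (RingHom.ker φ) =
      Nat.card (RingHom.ker φ) ^ Fintype.card ι * Nat.card {y : ι → S // ∑ i, y i ^ 2 = φ n} := by
  have : Finite S := Finite.of_surjective φ hφ
  let _ := Fintype.ofFinite {y : ι → S // ∑ i, y i ^ 2 = φ n}
  let e : {x : ι → R // ∑ i, x i ^ 2 = n} ≃
      Σ y : {y : ι → S // ∑ i, y i ^ 2 = φ n}, {x : ι → R // φ ∘ x = y ∧ ∑ i, x i ^ 2 = n} :=
    { toFun := fun x => ⟨⟨φ ∘ x, by simp [← map_pow, ← map_sum, x.2]⟩, ⟨x, rfl, x.2⟩⟩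
      invFun := fun p => ⟨p.2.1, p.2.2.2⟩
      left_inv := fun x => rfl
      right_inv := fun p => Sigma.subtype_ext (Subtype.ext p.2.2.1) rfl }
  rw [Nat.card_congr e, Nat.card_sigma, Finset.sum_mul, Finset.sum_congr rfl fun y _ =>
    (hunit y.1 y.2).elim fun _ hi => card_lifts_sum_sq_mul_card_ker hφ hsq y.2 hi,
    Finset.sum_const, Finset.card_univ, smul_eq_mul, mul_comm,
    Nat.card_eq_fintype_card (α := {y : ι → S // ∑ i, y i ^ 2 = φ n})]

end SquareZero

theorem ZMod.mul_eq_zero_of_mem_ker_castHom {m N : ℕ} [NeZero N] (hmN : m ∣ N) (hN : N ∣ m ^ 2)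
    {u v : ZMod N} (hu : u ∈ RingHom.ker (ZMod.castHom hmN (ZMod m)))
    (hv : v ∈ RingHom.ker (ZMod.castHom hmN (ZMod m))) : u * v = 0 := by
  rw [RingHom.mem_ker, ← ZMod.natCast_zmod_val u, map_natCast, ZMod.natCast_eq_zero_iff] at hu
  rw [RingHom.mem_ker, ← ZMod.natCast_zmod_val v, map_natCast, ZMod.natCast_eq_zero_iff] at hv
  rw [← ZMod.natCast_zmod_val u, ← ZMod.natCast_zmod_val v, ← Nat.cast_mul,
    ZMod.natCast_eq_zero_iff]
  exact hN.trans (sq m ▸ mul_dvd_mul hu hv)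

theorem ZMod.isUnit_of_castHom_ne_zero {p a : ℕ} [Fact p.Prime] (ha : a ≠ 0) {x : ZMod (p ^ a)}
    (hx : ZMod.castHom (dvd_pow_self p ha) (ZMod p) x ≠ 0) : IsUnit x := by
  rw [← ZMod.natCast_zmod_val x, map_natCast, Ne, ZMod.natCast_eq_zero_iff] at hx
  rwa [← ZMod.natCast_zmod_val x,
    ZMod.isUnit_natCast_iff_not_dvd_pow Fact.out (Nat.pos_of_ne_zero ha)]

theorem ZMod.exists_isUnit_two_mul_of_sum_sq {p a : ℕ} [Fact p.Prime] (hp2 : p ≠ 2) (ha : a ≠ 0)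
    {ι : Type*} [Fintype ι] {n : ℤ} (hn : (n : ZMod p) ≠ 0) {y : ι → ZMod (p ^ a)}
    (hy : ∑ i, y i ^ 2 = n) : ∃ i, IsUnit (2 * y i) := by
  set ρ := ZMod.castHom (dvd_pow_self p ha) (ZMod p)
  have hρ : ∑ i, ρ (y i) ^ 2 = n := by simpa [map_sum, map_pow] using congrArg ρ hy
  obtain ⟨i, -, hi⟩ := Finset.exists_ne_zero_of_sum_ne_zero (hρ ▸ hn)
  refine ⟨i, ZMod.isUnit_of_castHom_ne_zero ha ?_⟩
  rw [map_mul, map_ofNat]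
  exact mul_ne_zero (Ring.two_ne_zero (by rwa [ZMod.ringChar_zmod_n]))
    ((pow_ne_zero_iff two_ne_zero).1 hi)

theorem sumSqCount_zmod_prime_pow_succ {p a : ℕ} [hp : Fact p.Prime] (hp2 : p ≠ 2) (ha : a ≠ 0)
    (k : ℕ) {n : ℤ} (hn : (n : ZMod p) ≠ 0) :
    sumSqCount (ZMod (p ^ (a + 1))) (k + 1) n = p ^ k * sumSqCount (ZMod (p ^ a)) (k + 1) n := by
  set φ := ZMod.castHom (pow_dvd_pow p (Nat.le_add_right a 1)) (ZMod (p ^ a))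
  have hφ : Function.Surjective φ := ZMod.castHom_surjective _
  have hN : p ^ (a + 1) ∣ (p ^ a) ^ 2 := by
    rw [← pow_mul]
    exact pow_dvd_pow p (by omega)
  have hK : Nat.card (RingHom.ker φ) = p := by
    have hcard := card_ker_mul_card_of_surjective hφ
    rw [Nat.card_zmod, Nat.card_zmod] at hcard
    exact Nat.eq_of_mul_eq_mul_right (pow_pos hp.out.pos a) (hcard.trans (pow_succ' p a))
  have hcard := card_sum_sq_mul_card_ker hφ
    (fun _ hu _ hv => ZMod.mul_eq_zero_of_mem_ker_castHom _ hN hu hv) (ι := Fin (k + 1))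
    (n := (n : ZMod (p ^ (a + 1))))
    fun y hy => ZMod.exists_isUnit_two_mul_of_sum_sq hp2 ha hn (hy.trans (map_intCast φ n))
  rw [hK, Fintype.card_fin, map_intCast] at hcard
  apply Nat.eq_of_mul_eq_mul_right hp.out.pos
  calc _ = _ := hcard
    _ = _ := by unfold sumSqCount; ring

theorem sumSqCount_zmod_prime_pow {p : ℕ} [Fact p.Prime] (hp2 : p ≠ 2) (m b : ℕ) {n : ℤ}
    (hn : (n : ZMod p) ≠ 0) :
    (sumSqCount (ZMod (p ^ (b + 1))) (4 * m + 1) n : ℤ) =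
      p ^ (4 * m * b) * (p ^ (4 * m) + p ^ (2 * m) * legendreSym p n) := by
  induction b with
  | zero =>
    rw [zero_add, pow_one, sumSqCount_four_mul_add_one (by rwa [ZMod.ringChar_zmod_n]), ZMod.card,
      mul_zero, pow_zero, one_mul]
    rfl
  | succ b ih =>
    rw [sumSqCount_zmod_prime_pow_succ hp2 b.succ_ne_zero (4 * m) hn, Nat.cast_mul, ih]
    push_cast
    ring

theorem sumSqCount_zmod_mul {a b : ℕ} (h : a.Coprime b) (k : ℕ) (n : ℤ) :
    sumSqCount (ZMod (a * b)) k n = sumSqCount (ZMod a) k n * sumSqCount (ZMod b) k n := by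
  rw [sumSqCount_ringEquiv (ZMod.chineseRemainder h), sumSqCount_prod, map_intCast]
  rfl

noncomputable def jacobiWeight (m : ℕ) (n : ℤ) : ArithmeticFunction ℝ :=
  ⟨fun d => (moebius d : ℝ) ^ 2 / (d : ℝ) ^ (2 * m) * (jacobiSym n d : ℝ), by simp⟩

theorem jacobiWeight_apply (m : ℕ) (n : ℤ) (d : ℕ) :
    jacobiWeight m n d = (moebius d : ℝ) ^ 2 / (d : ℝ) ^ (2 * m) * (jacobiSym n d : ℝ) := rfl

theorem isMultiplicative_jacobiWeight (m : ℕ) (n : ℤ) : (jacobiWeight m n).IsMultiplicative := by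
  rw [IsMultiplicative.iff_ne_zero]
  refine ⟨by simp [jacobiWeight_apply], fun {a b} ha hb hab => ?_⟩
  simp only [jacobiWeight_apply, isMultiplicative_moebius.map_mul_of_coprime hab,
    jacobiSym.mul_right' n ha hb]
  push_cast
  ring

theorem sum_divisors_prime_pow_jacobiWeight (m : ℕ) (n : ℤ) {p k : ℕ} (hp : p.Prime) (hk : k ≠ 0) :
    ∑ d ∈ (p ^ k).divisors, jacobiWeight m n d = 1 + jacobiSym n p / (p : ℝ) ^ (2 * m) := by
  obtain ⟨j, rfl⟩ := Nat.exists_eq_add_one_of_ne_zero hk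
  have hvanish : ∀ i, jacobiWeight m n (p ^ (i + 2)) = 0 := fun i => by
    simp [jacobiWeight_apply, moebius_apply_prime_pow hp]
  rw [Nat.sum_divisors_prime_pow hp, Finset.sum_range_succ', Finset.sum_range_succ',
    Finset.sum_eq_zero fun i _ => hvanish i]
  simp [jacobiWeight_apply, moebius_apply_prime hp, div_eq_inv_mul, add_comm]

theorem sumSqCount_zmod_prime_pow_eq {p k : ℕ} [hp : Fact p.Prime] (hp2 : p ≠ 2) (hk : k ≠ 0)
    (m : ℕ) {n : ℤ} (hn : (n : ZMod p) ≠ 0) :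
    (sumSqCount (ZMod (p ^ k)) (4 * m + 1) n : ℝ) =
      ((p ^ k : ℕ) : ℝ) ^ (4 * m) * ∑ d ∈ (p ^ k).divisors, jacobiWeight m n d := by
  obtain ⟨b, rfl⟩ := Nat.exists_eq_add_one_of_ne_zero hk
  have hcount := congrArg (Int.cast : ℤ → ℝ) (sumSqCount_zmod_prime_pow hp2 m b hn)
  push_cast at hcount
  rw [hcount, sum_divisors_prime_pow_jacobiWeight m n hp.out hk,
    ← jacobiSym.legendreSym.to_jacobiSym]
  have hp0 : (p : ℝ) ≠ 0 := Nat.cast_ne_zero.2 hp.out.ne_zero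
  push_cast
  field_simp
  ring

theorem count_sum_of_squares_4m_add_1 (m r : ℕ) (hr : 0 < r) (hodd : Odd r)
    (n : ℤ) (hn : IsCoprime n (r : ℤ)) :
    (Nat.card {x : Fin (4 * m + 1) → ZMod r // ∑ i, (x i) ^ 2 = (n : ZMod r)} : ℝ) =
      (r : ℝ) ^ (4 * m) * ∑ d ∈ r.divisors,
        ((moebius d : ℝ) ^ 2 / (d : ℝ) ^ (2 * m)) * (jacobiSym n d : ℝ) := by
  let count : ℕ → ℝ := fun r => sumSqCount (ZMod r) (4 * m + 1) n
  let formula : ℕ → ℝ := fun r => (r : ℝ) ^ (4 * m) * ∑ d ∈ r.divisors, jacobiWeight m n d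
  have hcount : ∀ a b, a.Coprime b → count (a * b) = count a * count b := fun a b h => by
    simp [count, sumSqCount_zmod_mul h]
  have hformula : ∀ a b, a.Coprime b → formula (a * b) = formula a * formula b := fun a b h => by
    simp only [formula, ← coe_mul_zeta_apply,
      ((isMultiplicative_jacobiWeight m n).mul isMultiplicative_zeta.natCast).map_mul_of_coprime h]
    push_cast
    ring
  change count r = formula r
  rw [Nat.multiplicative_factorization count hcount
      (by simp [count, sumSqCount_of_subsingleton]) hr.ne',
    Nat.multiplicative_factorization formula hformula
      (by simp [formula, jacobiWeight_apply]) hr.ne']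
  refine Finsupp.prod_congr fun p hp => ?_
  have hk := Finsupp.mem_support_iff.1 hp
  rw [Nat.support_factorization] at hp
  have hpr := Nat.dvd_of_mem_primeFactors hp
  have : Fact p.Prime := ⟨Nat.prime_of_mem_primeFactors hp⟩
  have hnp : (n : ZMod p) ≠ 0 := ((ZMod.coe_int_isUnit_iff_isCoprime n p).2
    (hn.of_isCoprime_of_dvd_right (Int.natCast_dvd_natCast.2 hpr)).symm).ne_zero
  exact sumSqCount_zmod_prime_pow_eq (hodd.ne_two_of_dvd_nat hpr) hk m hnp
end

section
/- For every prime power p^ν with p ≡ 3 (mod 4) and ν odd, the number of solutions of x² + y² ≡ 0 (mod p^ν) in (ℤ/p^νℤ)² equals p^{ν-1}; if instead ν is even, it equals p^ν; and if p ≡ 1 (mod 4), it equals p^ν(ν + 1 - ν/p). -/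
/-!
For `p ≡ 3 (mod 4)`, `-1` is not a square mod `p`, so `p ∣ x² + y²` forces `p ∣ x` and
`p ∣ y`; peeling off factors of `p` shows that the solutions mod `p ^ ν` are exactly the pairs
with `p ^ ⌈ν/2⌉` dividing both coordinates, and there are `p ^ (2⌊ν/2⌋)` of them.

For `p ≡ 1 (mod 4)`, a square root `θ` of `-1` mod `p` lifts to `ZMod (p ^ ν)` by Newton's
method, and the substitution `(x, y) ↦ (x + θy, x - θy)` turns `x² + y² = 0` into `uv = 0`.
For fixed `u` there are `gcd(p ^ ν, u)` solutions `v`, and summing over `u` gives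
`(ν + 1) p ^ ν - ν p ^ (ν - 1)`.
-/

open Finset Polynomial

namespace ZMod

theorem card_dvd_val {N d : ℕ} [NeZero N] (hd : d ∣ N) :
    Nat.card {x : ZMod N // d ∣ x.val} = N / d := by
  let f := (castHom hd (ZMod d)).toAddMonoidHom
  have hker : ∀ x : ZMod N, d ∣ x.val ↔ x ∈ f.ker := fun x => by
    rw [AddMonoidHom.mem_ker, ← natCast_eq_zero_iff]
    exact (cast_eq_val x).symm.congr_left
  have hcard := f.ker.card_mul_index
  rw [AddSubgroup.index_ker, AddMonoidHom.range_eq_top.mpr (castHom_surjective hd),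
    AddSubgroup.card_top, Nat.card_zmod, Nat.card_zmod] at hcard
  have hd0 : 0 < d := Nat.pos_of_dvd_of_pos hd (Nat.pos_of_ne_zero (NeZero.ne N))
  rw [Nat.card_congr (Equiv.subtypeEquivRight hker), Nat.div_eq_of_eq_mul_left hd0 hcard.symm]

theorem card_mul_eq_zero_right {N : ℕ} [NeZero N] (u : ZMod N) :
    Nat.card {v : ZMod N // u * v = 0} = N.gcd u.val := by
  have hord : addOrderOf u = N / N.gcd u.val := by
    rw [← addOrderOf_coe _ (NeZero.ne N), natCast_zmod_val]
  have hiff : ∀ v : ZMod N, u * v = 0 ↔ addOrderOf u ∣ v.val := fun v => by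
    rw [addOrderOf_dvd_iff_nsmul_eq_zero, nsmul_eq_mul, natCast_zmod_val, mul_comm]
  have hdvd : addOrderOf u ∣ N := hord ▸ Nat.div_dvd_of_dvd (Nat.gcd_dvd_left _ _)
  rw [Nat.card_congr (Equiv.subtypeEquivRight hiff), card_dvd_val hdvd, hord,
    Nat.div_div_self (Nat.gcd_dvd_left _ _) (NeZero.ne N)]

theorem sum_univ_eq_sum_range {N : ℕ} [NeZero N] {M : Type*} [AddCommMonoid M] (f : ℕ → M) :
    ∑ u : ZMod N, f u.val = ∑ i ∈ range N, f i := by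
  obtain ⟨k, rfl⟩ : ∃ k, N = k + 1 := Nat.exists_eq_succ_of_ne_zero (NeZero.ne N)
  exact Fin.sum_univ_eq_sum_range f (k + 1)

theorem card_mul_eq_zero {N : ℕ} [NeZero N] :
    Nat.card {q : ZMod N × ZMod N // q.1 * q.2 = 0} = ∑ i ∈ range N, N.gcd i := by
  rw [Nat.card_congr (Equiv.subtypeProdEquivSigmaSubtype fun u v : ZMod N => u * v = 0),
    Nat.card_sigma]
  simp only [card_mul_eq_zero_right]
  exact sum_univ_eq_sum_range _

theorem isUnit_two_of_odd {n : ℕ} (hn : Odd n) : IsUnit (2 : ZMod n) := by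
  simpa using (isUnit_iff_coprime 2 n).mpr (Nat.coprime_two_left.mpr hn)

end ZMod

theorem exists_sq_eq_neg_one_of_isNilpotent {R : Type*} [CommRing R] (h2 : IsUnit (2 : R))
    {x : R} (hx : IsNilpotent (x ^ 2 + 1)) : ∃ θ : R, θ ^ 2 = -1 := by
  have hxu : IsUnit x := by
    refine isUnit_of_mul_isUnit_left (y := x) ?_
    rw [← neg_neg (x * x), show -(x * x) = 1 - (x ^ 2 + 1) by ring]
    exact hx.isUnit_one_sub.neg
  have hnil : IsNilpotent (aeval x (X ^ 2 + 1 : R[X])) := by simpa using hx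
  have hunit : IsUnit (aeval x (derivative (X ^ 2 + 1 : R[X]))) := by
    simpa [one_add_one_eq_two] using h2.mul hxu
  obtain ⟨θ, -, hθ⟩ := (existsUnique_nilpotent_sub_and_aeval_eq_zero hnil hunit).exists
  exact ⟨θ, by simpa [add_eq_zero_iff_eq_neg] using hθ⟩

theorem ZMod.exists_sq_eq_neg_one_of_prime_pow {p : ℕ} [Fact p.Prime] (hp : p % 4 = 1)
    (ν : ℕ) : ∃ θ : ZMod (p ^ ν), θ ^ 2 = -1 := by
  obtain ⟨θ₀, hθ₀⟩ := exists_sq_eq_neg_one_iff.mpr (by omega : p % 4 ≠ 3)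
  have hdvd : p ∣ θ₀.val ^ 2 + 1 := by
    rw [← natCast_eq_zero_iff]
    push_cast
    rw [natCast_zmod_val, sq, ← hθ₀, neg_add_cancel]
  refine exists_sq_eq_neg_one_of_isNilpotent (isUnit_two_of_odd (Nat.odd_iff.mpr (by omega)).pow)
    (x := (θ₀.val : ZMod (p ^ ν))) ⟨ν, ?_⟩
  rw [← Nat.cast_pow, ← Nat.cast_one, ← Nat.cast_add, ← Nat.cast_pow, natCast_eq_zero_iff]
  exact pow_dvd_pow_of_dvd hdvd ν

theorem Nat.Prime.dvd_and_dvd_of_dvd_sq_add_sq {p a b : ℕ} (hp : p.Prime) (h3 : p % 4 = 3)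
    (h : p ∣ a ^ 2 + b ^ 2) : p ∣ a ∧ p ∣ b := by
  have := Fact.mk hp
  have hab : (a : ZMod p) ^ 2 = -(b : ZMod p) ^ 2 := by
    rw [eq_neg_iff_add_eq_zero]
    exact_mod_cast (ZMod.natCast_eq_zero_iff _ _).mpr h
  have hb : (b : ZMod p) = 0 := by
    by_contra hb
    exact ZMod.mod_four_ne_three_of_sq_eq_neg_sq' hb hab h3
  rw [hb, zero_pow two_ne_zero, neg_zero, pow_eq_zero_iff two_ne_zero] at hab
  rw [← ZMod.natCast_eq_zero_iff, ← ZMod.natCast_eq_zero_iff]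
  exact ⟨hab, hb⟩

theorem Nat.Prime.pow_dvd_sq_add_sq_iff {p : ℕ} (hp : p.Prime) (h3 : p % 4 = 3) {n a b : ℕ} :
    p ^ n ∣ a ^ 2 + b ^ 2 ↔ p ^ ((n + 1) / 2) ∣ a ∧ p ^ ((n + 1) / 2) ∣ b := by
  refine ⟨fun h => ?_, fun ⟨ha, hb⟩ => ?_⟩
  · induction n using Nat.strong_induction_on generalizing a b with
    | _ n ih =>
      match n with
      | 0 => simp
      | 1 => simpa using hp.dvd_and_dvd_of_dvd_sq_add_sq h3 (by simpa using h)
      | n + 2 =>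
        obtain ⟨⟨a, rfl⟩, ⟨b, rfl⟩⟩ :=
          hp.dvd_and_dvd_of_dvd_sq_add_sq h3 ((dvd_pow_self p (by omega)).trans h)
        have h' : p ^ 2 * p ^ n ∣ p ^ 2 * (a ^ 2 + b ^ 2) := by convert h using 1 <;> ring
        obtain ⟨ha, hb⟩ := ih n (by omega) ((Nat.mul_dvd_mul_iff_left (pow_pos hp.pos 2)).mp h')
        rw [show (n + 2 + 1) / 2 = (n + 1) / 2 + 1 by omega, pow_succ']
        exact ⟨mul_dvd_mul_left p ha, mul_dvd_mul_left p hb⟩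
  · refine (pow_dvd_pow p (by omega : n ≤ (n + 1) / 2 * 2)).trans ?_
    rw [pow_mul]
    exact dvd_add (pow_dvd_pow_of_dvd ha 2) (pow_dvd_pow_of_dvd hb 2)

theorem Nat.filter_dvd_range_pow_succ {p : ℕ} (hp : 0 < p) (n : ℕ) :
    {u ∈ range (p ^ (n + 1)) | p ∣ u}
      = (range (p ^ n)).map ⟨(p * ·), mul_right_injective₀ hp.ne'⟩ := by
  ext u
  simp only [mem_filter, mem_range, mem_map, Function.Embedding.coeFn_mk, pow_succ']
  constructor
  · rintro ⟨hu, w, rfl⟩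
    exact ⟨w, Nat.lt_of_mul_lt_mul_left hu, rfl⟩
  · rintro ⟨w, hw, rfl⟩
    exact ⟨Nat.mul_lt_mul_of_pos_left hw hp, dvd_mul_right p w⟩

theorem Nat.sum_range_gcd_prime_pow_succ {p : ℕ} (hp : p.Prime) (n : ℕ) :
    ∑ u ∈ range (p ^ (n + 1)), (p ^ (n + 1)).gcd u + p ^ n
      = p * ∑ u ∈ range (p ^ n), (p ^ n).gcd u + p ^ (n + 1) := by
  have hmult := Nat.filter_dvd_range_pow_succ hp.pos n
  have hsum_mult : ∑ u ∈ range (p ^ (n + 1)) with p ∣ u, (p ^ (n + 1)).gcd u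
      = p * ∑ u ∈ range (p ^ n), (p ^ n).gcd u := by
    rw [hmult, sum_map, mul_sum]
    exact sum_congr rfl fun w _ => by simp [pow_succ', Nat.gcd_mul_left]
  have hsum_coprime : ∑ u ∈ range (p ^ (n + 1)) with ¬p ∣ u, (p ^ (n + 1)).gcd u
      = #{u ∈ range (p ^ (n + 1)) | ¬p ∣ u} := by
    rw [card_eq_sum_ones]
    exact sum_congr rfl fun u hu =>
      Nat.Coprime.pow_left _ (hp.coprime_iff_not_dvd.mpr (mem_filter.mp hu).2)
  have hcard := card_filter_add_card_filter_not (s := range (p ^ (n + 1))) (p ∣ ·)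
  rw [hmult, card_map, card_range, card_range] at hcard
  rw [← sum_filter_add_sum_filter_not _ (p ∣ ·), hsum_mult, hsum_coprime]
  omega

theorem Nat.sum_range_gcd_prime_pow {p : ℕ} (hp : p.Prime) (n : ℕ) :
    p * ∑ u ∈ range (p ^ n), (p ^ n).gcd u + n * p ^ n = (n + 1) * p ^ (n + 1) := by
  induction n with
  | zero => simp
  | succ n ih =>
    have := Nat.sum_range_gcd_prime_pow_succ hp n
    linear_combination p * this + p * ih

theorem card_sq_add_sq_eq_zero_eq_card_mul_eq_zero {R : Type*} [CommRing R]
    (h2 : IsUnit (2 : R)) {θ : R} (hθ : θ ^ 2 = -1) :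
    Nat.card {q : R × R // q.1 ^ 2 + q.2 ^ 2 = 0} = Nat.card {q : R × R // q.1 * q.2 = 0} := by
  obtain ⟨c, hc⟩ := h2.exists_right_inv
  let e : R × R ≃ R × R :=
    { toFun := fun q => (q.1 + θ * q.2, q.1 - θ * q.2)
      invFun := fun q => (c * (q.1 + q.2), c * θ * (q.2 - q.1))
      left_inv := fun ⟨x, y⟩ => by
        ext
        · linear_combination x * hc
        · linear_combination y * hc - 2 * c * y * hθ
      right_inv := fun ⟨u, v⟩ => by
        ext
        · linear_combination u * hc + c * (v - u) * hθ
        · linear_combination v * hc - c * (v - u) * hθ }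
  refine Nat.card_congr (e.subtypeEquiv fun ⟨x, y⟩ => ?_)
  show _ ↔ (x + θ * y) * (x - θ * y) = 0
  rw [show (x + θ * y) * (x - θ * y) = x ^ 2 + y ^ 2 by linear_combination -y ^ 2 * hθ]

theorem card_sq_add_sq_eq_zero_of_mod_four_eq_three {p : ℕ} (hp : p.Prime) (h3 : p % 4 = 3)
    (ν : ℕ) :
    Nat.card {q : ZMod (p ^ ν) × ZMod (p ^ ν) // q.1 ^ 2 + q.2 ^ 2 = 0}
      = p ^ (2 * (ν / 2)) := by
  have : NeZero (p ^ ν) := ⟨pow_ne_zero ν hp.ne_zero⟩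
  let P : ZMod (p ^ ν) → Prop := fun x => p ^ ((ν + 1) / 2) ∣ x.val
  have hsol : ∀ q : ZMod (p ^ ν) × ZMod (p ^ ν), q.1 ^ 2 + q.2 ^ 2 = 0 ↔ P q.1 ∧ P q.2 :=
    fun ⟨x, y⟩ => by
      rw [← hp.pow_dvd_sq_add_sq_iff h3, ← ZMod.natCast_eq_zero_iff]
      push_cast
      rw [ZMod.natCast_zmod_val, ZMod.natCast_zmod_val]
  rw [Nat.card_congr ((Equiv.subtypeEquivRight hsol).trans Equiv.subtypeProdEquivProd),
    Nat.card_prod, ZMod.card_dvd_val (pow_dvd_pow p (by omega)), Nat.pow_div (by omega) hp.pos,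
    ← pow_add]
  congr 1
  omega

theorem card_sq_add_sq_eq_zero_of_mod_four_eq_one {p : ℕ} (hp : p.Prime) (h1 : p % 4 = 1)
    (ν : ℕ) :
    p * Nat.card {q : ZMod (p ^ ν) × ZMod (p ^ ν) // q.1 ^ 2 + q.2 ^ 2 = 0} + ν * p ^ ν
      = (ν + 1) * p ^ (ν + 1) := by
  have := Fact.mk hp
  obtain ⟨θ, hθ⟩ := ZMod.exists_sq_eq_neg_one_of_prime_pow h1 ν
  rw [card_sq_add_sq_eq_zero_eq_card_mul_eq_zero
    (ZMod.isUnit_two_of_odd (Nat.odd_iff.mpr (by omega)).pow) hθ, ZMod.card_mul_eq_zero]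
  exact Nat.sum_range_gcd_prime_pow hp ν

theorem count_x2_add_y2_zero_prime_pow_general (p : ℕ) (hp : p.Prime)
    (ν : ℕ) :
    ((p % 4 = 3 ∧ Odd ν) →
        Nat.card {q : ZMod (p ^ ν) × ZMod (p ^ ν) // q.1 ^ 2 + q.2 ^ 2 = 0} = p ^ (ν - 1)) ∧
      ((p % 4 = 3 ∧ Even ν) →
        Nat.card {q : ZMod (p ^ ν) × ZMod (p ^ ν) // q.1 ^ 2 + q.2 ^ 2 = 0} = p ^ ν) ∧
      (p % 4 = 1 →
        (Nat.card {q : ZMod (p ^ ν) × ZMod (p ^ ν) // q.1 ^ 2 + q.2 ^ 2 = 0} : ℝ) =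
          (p : ℝ) ^ ν * (ν + 1 - ν / p)) := by
  refine ⟨fun ⟨h3, ⟨k, hk⟩⟩ => ?_, fun ⟨h3, ⟨k, hk⟩⟩ => ?_, fun h1 => ?_⟩
  · rw [card_sq_add_sq_eq_zero_of_mod_four_eq_three hp h3]
    congr 1
    omega
  · rw [card_sq_add_sq_eq_zero_of_mod_four_eq_three hp h3]
    congr 1
    omega
  · have hcount := card_sq_add_sq_eq_zero_of_mod_four_eq_one hp h1 ν
    replace hcount := congrArg (Nat.cast : ℕ → ℝ) hcount
    push_cast at hcount
    have hp0 : (p : ℝ) ≠ 0 := by exact_mod_cast hp.ne_zero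
    field_simp
    linear_combination hcount

theorem count_x2_add_y2_zero_prime_pow (p : ℕ) (hp : p.Prime) (hodd : p ≠ 2)
    (ν : ℕ) (hν : 1 ≤ ν) :
    ((p % 4 = 3 ∧ Odd ν) →
        Nat.card {q : ZMod (p ^ ν) × ZMod (p ^ ν) // q.1 ^ 2 + q.2 ^ 2 = 0} = p ^ (ν - 1)) ∧
      ((p % 4 = 3 ∧ Even ν) →
        Nat.card {q : ZMod (p ^ ν) × ZMod (p ^ ν) // q.1 ^ 2 + q.2 ^ 2 = 0} = p ^ ν) ∧
      (p % 4 = 1 →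
        (Nat.card {q : ZMod (p ^ ν) × ZMod (p ^ ν) // q.1 ^ 2 + q.2 ^ 2 = 0} : ℝ) =
          (p : ℝ) ^ ν * (ν + 1 - ν / p)) :=
  count_x2_add_y2_zero_prime_pow_general p hp ν
end
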